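/- Consider a PJR-Exact run of an approval-based multi-winner election, fix j with 1 ≤ j ≤ k, and suppose the first j iterations of the run are all normal. For each voter i let ℓ_j(i) = max_{c ∈ A_i \ W_j} ℓ_j(c) (with max ∅ = 0). Then for each voter i, either |A_i ∩ W_j| ≥ ℓ_j(i), or f^j_i ≥ (ℓ_j(i) − |A_i ∩ W_j|)/ℓ_j(i). -/

import Mathlib

open Finset

variable {C : Type*} [Fintype C] [DecidableEq C]

/-- The voters approving candidate `c`. -/
def approvers {n : ℕ} (A : Fin n → Finset C) (c : C) : Finset (Fin n) :=
  Finset.univ.filter (fun i => c ∈ A i)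

/-- The exact quota `q = n / k`. -/
def quota (n k : ℕ) : ℚ := (n : ℚ) / (k : ℚ)

/-- Remaining support of candidate `c` under vote fractions `f`. -/
def supp {n : ℕ} (A : Fin n → Finset C) (f : Fin n → ℚ) (c : C) : ℚ :=
  ∑ i ∈ approvers A c, f i

/-- The set `W_j = {w_1, …, w_j}` of the first `j` winners. -/
def Wset (w : ℕ → C) (j : ℕ) : Finset C := (Finset.Icc 1 j).image w

/-- The candidates approved by every voter in `Ns`, i.e. `⋂_{i ∈ Ns} A i`. -/
def commonApproved {n : ℕ} (A : Fin n → Finset C) (Ns : Finset (Fin n)) : Finset C :=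
  Finset.univ.filter (fun c => ∀ i ∈ Ns, c ∈ A i)

/-- `Ns` is an `ℓ`-cohesive group of voters: `|Ns| ≥ ℓ·n/k` and `|⋂_{i ∈ Ns} A i| ≥ ℓ`. -/
def Cohesive {n : ℕ} (A : Fin n → Finset C) (k ℓ : ℕ) (Ns : Finset (Fin n)) : Prop :=
  (ℓ : ℚ) * (n : ℚ) / (k : ℚ) ≤ (Ns.card : ℚ) ∧ ℓ ≤ (commonApproved A Ns).card

/-- `W` provides proportional justified representation for `(A, k)`. -/
def ProvidesPJR {n : ℕ} (A : Fin n → Finset C) (k : ℕ) (W : Finset C) : Prop :=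
  ∀ ℓ : ℕ, 1 ≤ ℓ → ℓ ≤ k → ∀ Ns : Finset (Fin n), Cohesive A k ℓ Ns →
    ℓ ≤ (W ∩ Ns.biUnion A).card

/-- `W` provides extended justified representation for `(A, k)`. -/
def ProvidesEJR {n : ℕ} (A : Fin n → Finset C) (k : ℕ) (W : Finset C) : Prop :=
  ∀ ℓ : ℕ, 1 ≤ ℓ → ℓ ≤ k → ∀ Ns : Finset (Fin n), Cohesive A k ℓ Ns →
    ∃ i ∈ Ns, ℓ ≤ (A i ∩ W).card

/-- The set of `ℓ`'s satisfying the dissatisfaction-level fixpoint equation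
`ℓ = ⌊(k/n)·|{i : c ∈ A_i ∧ |A_i ∩ W| < ℓ}|⌋`
(natural-number division `k * m / n` is exactly the floor `⌊(k/n)·m⌋`). -/
def dissatSet {n : ℕ} (A : Fin n → Finset C) (k : ℕ) (W : Finset C) (c : C) : Set ℕ :=
  {ℓ : ℕ | ℓ = k * (Finset.univ.filter (fun i => c ∈ A i ∧ (A i ∩ W).card < ℓ)).card / n}

/-- The dissatisfaction level `ℓ(c, W)`: the largest non-negative integer satisfying
the fixpoint equation. -/
noncomputable def dissat {n : ℕ} (A : Fin n → Finset C) (k : ℕ) (W : Finset C) (c : C) : ℕ :=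
  sSup (dissatSet A k W c)

/-- `ℓ_W(i, c) = max_{c' ∈ A_i \ (W ∪ {c})} ℓ(c', W)` (with `max ∅ = 0`). -/
noncomputable def dissatVoter {n : ℕ} (A : Fin n → Finset C) (k : ℕ) (W : Finset C)
    (i : Fin n) (c : C) : ℕ :=
  (A i \ insert c W).sup (dissat A k W)

/-- `ℓ_W(i) = max_{c ∈ A_i \ W} ℓ(c, W)` (with `max ∅ = 0`). -/
noncomputable def dissatVoterAll {n : ℕ} (A : Fin n → Finset C) (k : ℕ) (W : Finset C)
    (i : Fin n) : ℕ :=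
  (A i \ W).sup (dissat A k W)

/-- `g_i(c)` relative to the committee `W`. -/
noncomputable def gfun {n : ℕ} (A : Fin n → Finset C) (k : ℕ) (W : Finset C)
    (i : Fin n) (c : C) : ℚ :=
  if dissatVoter A k W i c ≤ (A i ∩ W).card then 0
  else ((dissatVoter A k W i c : ℚ) - ((A i ∩ W).card : ℚ) - 1) / (dissatVoter A k W i c : ℚ)

/-- Candidate `c ∉ W` is in a normal state (w.r.t. committee `W` and fractions `f`). -/
def NormalState {n : ℕ} (A : Fin n → Finset C) (k : ℕ) (f : Fin n → ℚ) (W : Finset C)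
    (c : C) : Prop :=
  (∀ i : Fin n, c ∈ A i → (A i ∩ W).card < dissatVoter A k W i c →
      ((dissatVoter A k W i c : ℚ) - ((A i ∩ W).card : ℚ)) / (dissatVoter A k W i c : ℚ) ≤ f i) ∧
  quota n k ≤ ∑ i ∈ approvers A c, (f i - gfun A k W i c)

/-- Candidate `c ∉ W` is in a starving state. -/
def StarvingState {n : ℕ} (A : Fin n → Finset C) (k : ℕ) (f : Fin n → ℚ) (W : Finset C)
    (c : C) : Prop :=
  ∃ i : Fin n, c ∈ A i ∧ (A i ∩ W).card < dissatVoter A k W i c ∧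
    f i < ((dissatVoter A k W i c : ℚ) - ((A i ∩ W).card : ℚ)) / (dissatVoter A k W i c : ℚ)

/-- Candidate `c ∉ W` is in an eager state. -/
def EagerState {n : ℕ} (A : Fin n → Finset C) (k : ℕ) (f : Fin n → ℚ) (W : Finset C)
    (c : C) : Prop :=
  ¬ StarvingState A k f W c ∧ quota n k ≤ supp A f c ∧
    ∑ i ∈ approvers A c, (f i - gfun A k W i c) < quota n k

/-- A run of a voting rule in the PJR-Exact family: a sequence of distinct winners
`w 1, …, w k` together with fraction functions `f 0, …, f k` satisfying the three
defining conditions of the family. -/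
structure PJRExactRun (n k : ℕ) (A : Fin n → Finset C) where
  w : ℕ → C
  f : ℕ → Fin n → ℚ
  /-- the selected candidates are pairwise distinct -/
  w_inj : ∀ j j' : ℕ, 1 ≤ j → j ≤ k → 1 ≤ j' → j' ≤ k → w j = w j' → j = j'
  /-- initially each voter has her whole vote -/
  f_zero : ∀ i, f 0 i = 1
  /-- fractions stay non-negative -/
  f_nonneg : ∀ j, 1 ≤ j → j ≤ k → ∀ i, 0 ≤ f j i
  /-- fractions never increase -/
  f_mono : ∀ j, 1 ≤ j → j ≤ k → ∀ i, f j i ≤ f (j - 1) i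
  /-- if the remaining support of the winner exceeds the quota, exactly `q` votes are removed -/
  remove_big : ∀ j, 1 ≤ j → j ≤ k → quota n k < supp A (f (j - 1)) (w j) →
    ∑ i ∈ approvers A (w j), (f (j - 1) i - f j i) = quota n k
  /-- if the remaining support of the winner is at most the quota, all of it is removed -/
  remove_small : ∀ j, 1 ≤ j → j ≤ k → supp A (f (j - 1)) (w j) ≤ quota n k →
    ∀ i, w j ∈ A i → f j i = 0
  /-- voters not approving the winner keep their fractions -/
  f_untouched : ∀ j, 1 ≤ j → j ≤ k → ∀ i, w j ∉ A i → f j i = f (j - 1) i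
  /-- if some unelected candidate has remaining support at least `q`,
  then so has the selected one -/
  greedy : ∀ j, 1 ≤ j → j ≤ k →
    (∃ c, c ∉ Wset w (j - 1) ∧ quota n k ≤ supp A (f (j - 1)) c) →
    quota n k ≤ supp A (f (j - 1)) (w j)

/-- Iteration `j` of a PJR-Exact run is normal. -/
def NormalIteration {n k : ℕ} {A : Fin n → Finset C} (R : PJRExactRun n k A) (j : ℕ) : Prop :=
  NormalState A k (R.f (j - 1)) (Wset R.w (j - 1)) (R.w j) ∧
  ∀ i : Fin n, R.w j ∈ A i →
    (A i ∩ Wset R.w (j - 1)).card < dissatVoter A k (Wset R.w (j - 1)) i (R.w j) →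
    ((dissatVoter A k (Wset R.w (j - 1)) i (R.w j) : ℚ) - ((A i ∩ Wset R.w j).card : ℚ)) /
      (dissatVoter A k (Wset R.w (j - 1)) i (R.w j) : ℚ) ≤ R.f j i

/-!
The dissatisfaction level `ℓ(c, W)` is the largest fixed point of a monotone map which
decreases pointwise as `W` grows, so levels only drop as winners are added. Induct on `j`.
If voter `i` approves `w_j`, normality of iteration `j` gives the bound with
`ℓ_{j-1}(i, w_j) ≥ ℓ_j(i)` in place of `ℓ_j(i)`; otherwise `f_i` and `|A_i ∩ W|` are unchanged
and `ℓ_j(i) ≤ ℓ_{j-1}(i)`. In both cases one concludes because `(L - s)/L` is monotone in `L`.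
-/

omit [Fintype C]

def dissatMap {n : ℕ} (A : Fin n → Finset C) (k : ℕ) (W : Finset C) (c : C) (ℓ : ℕ) : ℕ :=
  k * (univ.filter (fun i => c ∈ A i ∧ (A i ∩ W).card < ℓ)).card / n

section DissatisfactionLevel

variable {n : ℕ} (A : Fin n → Finset C) (k : ℕ)

lemma dissatSet_eq_fixedPoints (W : Finset C) (c : C) :
    dissatSet A k W c = Function.fixedPoints (dissatMap A k W c) :=
  Set.ext fun _ => eq_comm

lemma dissatMap_le (W : Finset C) (c : C) (ℓ : ℕ) : dissatMap A k W c ℓ ≤ k := by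
  apply Nat.div_le_of_le_mul
  rw [mul_comm n]
  exact Nat.mul_le_mul_left k ((card_le_univ _).trans_eq (Fintype.card_fin n))

lemma dissatMap_mono (W : Finset C) (c : C) : Monotone (dissatMap A k W c) := by
  intro ℓ ℓ' h
  refine Nat.div_le_div_right (Nat.mul_le_mul_left k (card_le_card fun i hi => ?_))
  simp only [mem_filter] at hi ⊢
  exact ⟨hi.1, hi.2.1, hi.2.2.trans_le h⟩

lemma dissatMap_anti {W W' : Finset C} (hW : W ⊆ W') (c : C) (ℓ : ℕ) :
    dissatMap A k W' c ℓ ≤ dissatMap A k W c ℓ := by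
  refine Nat.div_le_div_right (Nat.mul_le_mul_left k (card_le_card fun i hi => ?_))
  simp only [mem_filter] at hi ⊢
  exact ⟨hi.1, hi.2.1, (card_le_card (inter_subset_inter_left hW)).trans_lt hi.2.2⟩

lemma bddAbove_dissatSet (W : Finset C) (c : C) : BddAbove (dissatSet A k W c) := by
  refine ⟨k, fun x hx => ?_⟩
  rw [dissatSet_eq_fixedPoints] at hx
  exact hx ▸ dissatMap_le A k W c x

lemma isFixedPt_dissat (W : Finset C) (c : C) :
    Function.IsFixedPt (dissatMap A k W c) (dissat A k W c) := by
  rw [← Function.mem_fixedPoints, ← dissatSet_eq_fixedPoints]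
  exact Nat.sSup_mem ⟨0, by simp [dissatSet]⟩ (bddAbove_dissatSet A k W c)

/-- Knaster–Tarski: the supremum of the post-fixed points of the monotone map is a fixed point. -/
lemma le_dissat_of_le_dissatMap {W : Finset C} {c : C} {ℓ : ℕ}
    (h : ℓ ≤ dissatMap A k W c ℓ) : ℓ ≤ dissat A k W c := by
  set f := dissatMap A k W c
  have hbdd : BddAbove {m | m ≤ f m} := ⟨k, fun m hm => hm.trans (dissatMap_le A k W c m)⟩
  set m := sSup {m | m ≤ f m}
  have hm : m ≤ f m := Nat.sSup_mem ⟨ℓ, h⟩ hbdd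
  have hfm : f m ≤ m := le_csSup hbdd (dissatMap_mono A k W c hm)
  have hfix : m ∈ dissatSet A k W c := by
    rw [dissatSet_eq_fixedPoints]
    exact le_antisymm hfm hm
  exact (le_csSup hbdd h).trans (le_csSup (bddAbove_dissatSet A k W c) hfix)

lemma dissat_anti {W W' : Finset C} (hW : W ⊆ W') (c : C) :
    dissat A k W' c ≤ dissat A k W c :=
  le_dissat_of_le_dissatMap A k <|
    (isFixedPt_dissat A k W' c).ge.trans (dissatMap_anti A k hW c _)

lemma dissatVoterAll_anti {W W' : Finset C} (hW : W ⊆ W') (i : Fin n) :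
    dissatVoterAll A k W' i ≤ dissatVoterAll A k W i :=
  calc (A i \ W').sup (dissat A k W') ≤ (A i \ W').sup (dissat A k W) :=
        sup_mono_fun fun c _ => dissat_anti A k hW c
    _ ≤ (A i \ W).sup (dissat A k W) := sup_mono (sdiff_subset_sdiff le_rfl hW)

lemma dissatVoterAll_insert_le (W : Finset C) (i : Fin n) (c : C) :
    dissatVoterAll A k (insert c W) i ≤ dissatVoter A k W i c :=
  sup_mono_fun fun c' _ => dissat_anti A k (subset_insert c W) c'

end DissatisfactionLevel

lemma sub_div_self_le_sub_div_self {K : Type*} [Field K] [LinearOrder K] [IsStrictOrderedRing K]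
    {s L' L : K} (hs : 0 ≤ s) (hL' : 0 < L') (h : L' ≤ L) : (L' - s) / L' ≤ (L - s) / L := by
  rw [sub_div, sub_div, div_self hL'.ne', div_self (hL'.trans_le h).ne']
  exact sub_le_sub_left (div_le_div_of_nonneg_left hs hL' h) 1

def RetainsFraction {n : ℕ} (A : Fin n → Finset C) (k : ℕ) (W : Finset C) (f : Fin n → ℚ)
    (i : Fin n) : Prop :=
  dissatVoterAll A k W i ≤ (A i ∩ W).card ∨
    ((dissatVoterAll A k W i : ℚ) - ((A i ∩ W).card : ℚ)) / (dissatVoterAll A k W i : ℚ) ≤ f i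

section RetainsFraction

variable {n : ℕ} {A : Fin n → Finset C} {k : ℕ} {W W' : Finset C} {f f' : Fin n → ℚ} {i : Fin n}

lemma retainsFraction_of_one_le (hf : 1 ≤ f i) : RetainsFraction A k W f i :=
  Or.inr <| (div_le_one_of_le₀ (sub_le_self _ (Nat.cast_nonneg _)) (Nat.cast_nonneg _)).trans hf

lemma RetainsFraction.mono (h : RetainsFraction A k W f i) (hW : W ⊆ W')
    (hA : A i ∩ W' = A i ∩ W) (hf : f i ≤ f' i) : RetainsFraction A k W' f' i := by
  rw [RetainsFraction, hA]
  refine (le_or_gt (dissatVoterAll A k W' i) (A i ∩ W).card).imp id fun hlt => ?_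
  have hle := dissatVoterAll_anti A k hW i
  refine (sub_div_self_le_sub_div_self (K := ℚ) (Nat.cast_nonneg _) ?_
    (Nat.cast_le.mpr hle)).trans ((h.resolve_left (by omega)).trans hf)
  exact_mod_cast (Nat.zero_le _).trans_lt hlt

lemma retainsFraction_insert {c : C}
    (h : (A i ∩ W).card < dissatVoter A k W i c →
      ((dissatVoter A k W i c : ℚ) - ((A i ∩ insert c W).card : ℚ)) /
        (dissatVoter A k W i c : ℚ) ≤ f i) :
    RetainsFraction A k (insert c W) f i := by
  refine (le_or_gt (dissatVoterAll A k (insert c W) i) (A i ∩ insert c W).card).imp id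
    fun hlt => ?_
  have hle := dissatVoterAll_insert_le A k W i c
  have hcard : (A i ∩ W).card ≤ (A i ∩ insert c W).card :=
    card_le_card (inter_subset_inter_left (subset_insert c W))
  refine (sub_div_self_le_sub_div_self (K := ℚ) (Nat.cast_nonneg _) ?_
    (Nat.cast_le.mpr hle)).trans (h (by omega))
  exact_mod_cast (Nat.zero_le _).trans_lt hlt

end RetainsFraction

lemma Wset_succ (w : ℕ → C) (j : ℕ) : Wset w (j + 1) = insert (w (j + 1)) (Wset w j) := by
  rw [Wset, ← insert_Icc_right_eq_Icc_add_one (Nat.le_add_left 1 j), image_insert, Wset]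

lemma PJRExactRun.retainsFraction_of_normal {n k : ℕ} {A : Fin n → Finset C}
    (R : PJRExactRun n k A) {j : ℕ} (hjk : j ≤ k)
    (hnormal : ∀ j' : ℕ, 1 ≤ j' → j' ≤ j → NormalIteration R j') (i : Fin n) :
    RetainsFraction A k (Wset R.w j) (R.f j) i := by
  induction j with
  | zero => exact retainsFraction_of_one_le (R.f_zero i).ge
  | succ j ih =>
    rw [Wset_succ]
    by_cases hi : R.w (j + 1) ∈ A i
    · exact retainsFraction_insert
        (by simpa [← Wset_succ] using (hnormal (j + 1) le_add_self le_rfl).2 i hi)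
    · refine (ih (by omega) fun j' h1 h2 => hnormal j' h1 (by omega)).mono
        (subset_insert _ _) (by rw [inter_comm, insert_inter_of_notMem hi, inter_comm]) ?_
      exact (R.f_untouched (j + 1) le_add_self hjk i hi).ge

theorem normal_iterations_keep_fractions_general {C : Type*} [DecidableEq C] {n k : ℕ}
    (A : Fin n → Finset C) (R : PJRExactRun n k A)
    (j : ℕ) (hjk : j ≤ k)
    (hnormal : ∀ j' : ℕ, 1 ≤ j' → j' ≤ j → NormalIteration R j') :
    ∀ i : Fin n,
      dissatVoterAll A k (Wset R.w j) i ≤ (A i ∩ Wset R.w j).card ∨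
      ((dissatVoterAll A k (Wset R.w j) i : ℚ) - ((A i ∩ Wset R.w j).card : ℚ)) /
          (dissatVoterAll A k (Wset R.w j) i : ℚ) ≤ R.f j i :=
  R.retainsFraction_of_normal hjk hnormal

/-- Lemma 2 of the paper: after `j` normal iterations, every voter `i`
either already approves `ℓ_j(i)` winners, or retains a fraction of her vote of at least
`(ℓ_j(i) − |A_i ∩ W_j|)/ℓ_j(i)`. -/
theorem normal_iterations_keep_fractions {C : Type*} [Fintype C] [DecidableEq C] {n k : ℕ}
    (hn : 0 < n) (hk : 1 ≤ k) (hkC : k ≤ Fintype.card C)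
    (A : Fin n → Finset C) (R : PJRExactRun n k A)
    (j : ℕ) (hj1 : 1 ≤ j) (hjk : j ≤ k)
    (hnormal : ∀ j' : ℕ, 1 ≤ j' → j' ≤ j → NormalIteration R j') :
    ∀ i : Fin n,
      dissatVoterAll A k (Wset R.w j) i ≤ (A i ∩ Wset R.w j).card ∨
      ((dissatVoterAll A k (Wset R.w j) i : ℚ) - ((A i ∩ Wset R.w j).card : ℚ)) /
          (dissatVoterAll A k (Wset R.w j) i : ℚ) ≤ R.f j i :=
  normal_iterations_keep_fractions_general A R j hjk hnormal
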